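/- With the norms ‖·‖_k of the previous construction (‖v‖_k² = Σ_m ‖F^m_k(v)‖²/(‖F^m_k(u_k)‖²·e^{3|m|ε})), for every v ∈ ℝ^d one has e^{−3ε/2}·‖F_k(u_k)‖·‖v‖_k ≤ ‖F_k(v)‖_{k+1} ≤ e^{3ε/2}·‖F_k(u_k)‖·‖v‖_k. Consequently, for any unit vectors v, w (in the ‖·‖_k norm), e^{−3ε} ≤ ‖F_k(w)‖_{k+1}/‖F_k(v)‖_{k+1} ≤ e^{3ε}. -/

import Mathlib

noncomputable section

/-- The cocycle `F^n_k = P(k+n)∘(P k)⁻¹`, where `P k` is the composition of the maps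
from position `0` to position `k` (so `F^n_k` is the composition along positions
`k, …, k+n−1`, with the inverse composition for `n < 0`). -/
def coc {d : ℕ} (P : ℤ → (EuclideanSpace ℝ (Fin d) ≃L[ℝ] EuclideanSpace ℝ (Fin d)))
    (k n : ℤ) : EuclideanSpace ℝ (Fin d) ≃L[ℝ] EuclideanSpace ℝ (Fin d) :=
  (P k).symm.trans (P (k + n))

/-- `u_k`: the normalized image of `u` under the composition from position `0` to `k`. -/
def uvec {d : ℕ} (P : ℤ → (EuclideanSpace ℝ (Fin d) ≃L[ℝ] EuclideanSpace ℝ (Fin d)))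
    (u : EuclideanSpace ℝ (Fin d)) (k : ℤ) : EuclideanSpace ℝ (Fin d) :=
  ‖P k u‖⁻¹ • P k u

/-- The term of the series defining the adapted norm `‖·‖_k`. -/
def nrmTerm {d : ℕ} (P : ℤ → (EuclideanSpace ℝ (Fin d) ≃L[ℝ] EuclideanSpace ℝ (Fin d)))
    (u : EuclideanSpace ℝ (Fin d)) (ε : ℝ) (k : ℤ) (v : EuclideanSpace ℝ (Fin d))
    (m : ℤ) : ℝ :=
  ‖coc P k m v‖ ^ 2 / (‖coc P k m (uvec P u k)‖ ^ 2 * Real.exp (3 * |(m : ℝ)| * ε))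

/-- The adapted norm `‖v‖_k = (Σ_m ‖F^m_k v‖²/(‖F^m_k u_k‖²·e^{3|m|ε}))^{1/2}`. -/
def nrmK {d : ℕ} (P : ℤ → (EuclideanSpace ℝ (Fin d) ≃L[ℝ] EuclideanSpace ℝ (Fin d)))
    (u : EuclideanSpace ℝ (Fin d)) (ε : ℝ) (k : ℤ) (v : EuclideanSpace ℝ (Fin d)) : ℝ :=
  Real.sqrt (∑' m : ℤ, nrmTerm P u ε k v m)

/-! Since `u_{k+1}` is the normalization of `F_k u_k`, the index shift `m ↦ m + 1` turns the
`m`-th term of the series for `‖F_k v‖_{k+1}` into `‖F_k u_k‖² e^{3ε(|m+1| - |m|)}` times the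
`(m+1)`-st term of the series for `‖v‖_k`. The weight lies between `e^{-3ε}` and `e^{3ε}`, so
the two series of nonnegative terms are comparable term by term: they converge together (and
otherwise both `tsum`s are `0`), and square roots give the bounds. Dividing the bounds for two
`‖·‖_k`-unit vectors gives the ratio estimate. -/

open NormedSpace

theorem mul_tsum_le_tsum_and_tsum_le_mul_tsum {ι : Type*} {f g : ι → ℝ} {c c' : ℝ}
    (hf : ∀ i, 0 ≤ f i) (hg : ∀ i, 0 ≤ g i) (hc : 0 < c)
    (hlow : ∀ i, c * f i ≤ g i) (hup : ∀ i, g i ≤ c' * f i) :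
    c * ∑' i, f i ≤ ∑' i, g i ∧ ∑' i, g i ≤ c' * ∑' i, f i := by
  by_cases hfs : Summable f
  · have hgs : Summable g := .of_nonneg_of_le hg hup (hfs.mul_left c')
    rw [← tsum_mul_left, ← tsum_mul_left]
    exact ⟨(hfs.mul_left c).tsum_le_tsum hlow hgs, hgs.tsum_le_tsum hup (hfs.mul_left c')⟩
  · have hgs : ¬ Summable g := fun hgs => hfs <|
      .of_nonneg_of_le hf (fun i => (le_inv_mul_iff₀ hc).2 (hlow i)) (hgs.mul_left c⁻¹)
    simp [tsum_eq_zero_of_not_summable hfs, tsum_eq_zero_of_not_summable hgs]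

theorem div_mem_Icc_of_mem_Icc {a b c x y : ℝ} (ha : 0 < a) (hc : 0 < c)
    (hx : x ∈ Set.Icc (a * c) (b * c)) (hy : y ∈ Set.Icc (a * c) (b * c)) :
    y / x ∈ Set.Icc (a / b) (b / a) := by
  have hac : 0 < a * c := mul_pos ha hc
  rw [← mul_div_mul_right a b hc.ne', ← mul_div_mul_right b a hc.ne']
  exact ⟨div_le_div₀ (hac.le.trans hy.1) hy.1 (hac.trans_le hx.1) hx.2,
    div_le_div₀ (hac.le.trans (hy.1.trans hy.2)) hy.2 hac hx.1⟩

section AdaptedNorm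

variable {d : ℕ} {F P : ℤ → (EuclideanSpace ℝ (Fin d) ≃L[ℝ] EuclideanSpace ℝ (Fin d))}
  {u : EuclideanSpace ℝ (Fin d)} {ε : ℝ}

theorem uvec_eq_normalize (k : ℤ) : uvec P u k = normalize (P k u) :=
  rfl

theorem uvec_ne_zero (hu : u ≠ 0) (k : ℤ) : uvec P u k ≠ 0 := by
  rw [uvec_eq_normalize, Ne, normalize_eq_zero_iff]
  exact (P k).map_ne_zero_iff.2 hu

theorem norm_apply_uvec_pos (A : EuclideanSpace ℝ (Fin d) ≃L[ℝ] EuclideanSpace ℝ (Fin d))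
    (hu : u ≠ 0) (k : ℤ) : 0 < ‖A (uvec P u k)‖ :=
  norm_pos_iff.2 (A.map_ne_zero_iff.2 (uvec_ne_zero hu k))

theorem coc_succ_apply (hP : ∀ k, P (k + 1) = (P k).trans (F k)) (k m : ℤ)
    (x : EuclideanSpace ℝ (Fin d)) :
    coc P (k + 1) m (F k x) = coc P k (m + 1) x := by
  simp [coc, hP k, add_right_comm k 1 m, add_assoc]

theorem uvec_succ (hP : ∀ k, P (k + 1) = (P k).trans (F k)) (k : ℤ) :
    uvec P u (k + 1) = normalize (F k (uvec P u k)) := by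
  rw [uvec_eq_normalize, uvec_eq_normalize, hP k, ContinuousLinearEquiv.trans_apply]
  by_cases h : P k u = 0
  · simp [h]
  · change _ = normalize (F k (‖P k u‖⁻¹ • P k u))
    rw [map_smul, normalize_smul_of_pos (inv_pos.2 (norm_pos_iff.2 h))]

theorem norm_coc_succ_uvec_succ (hP : ∀ k, P (k + 1) = (P k).trans (F k)) (k m : ℤ) :
    ‖coc P (k + 1) m (uvec P u (k + 1))‖ =
      ‖F k (uvec P u k)‖⁻¹ * ‖coc P k (m + 1) (uvec P u k)‖ := by
  rw [uvec_succ hP, NormedSpace.normalize, map_smul, coc_succ_apply hP, norm_smul, norm_inv,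
    norm_norm]

theorem nrmTerm_succ_apply (hP : ∀ k, P (k + 1) = (P k).trans (F k)) (k : ℤ)
    (v : EuclideanSpace ℝ (Fin d)) (m : ℤ) :
    nrmTerm P u ε (k + 1) (F k v) m =
      ‖F k (uvec P u k)‖ ^ 2 * Real.exp (3 * |((m + 1 : ℤ) : ℝ)| * ε - 3 * |(m : ℝ)| * ε) *
        nrmTerm P u ε k v (m + 1) := by
  rw [nrmTerm, nrmTerm, coc_succ_apply hP, norm_coc_succ_uvec_succ hP, Real.exp_sub]
  by_cases hc : ‖F k (uvec P u k)‖ = 0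
  · simp [hc]
  · field_simp

theorem nrmTerm_nonneg (k : ℤ) (v : EuclideanSpace ℝ (Fin d)) (m : ℤ) :
    0 ≤ nrmTerm P u ε k v m := by
  unfold nrmTerm; positivity

theorem nrmK_sq (k : ℤ) (v : EuclideanSpace ℝ (Fin d)) :
    nrmK P u ε k v ^ 2 = ∑' m, nrmTerm P u ε k v m :=
  Real.sq_sqrt (tsum_nonneg (nrmTerm_nonneg k v))

theorem sq_nrmK_succ_apply_bounds (hP : ∀ k, P (k + 1) = (P k).trans (F k)) (hu : u ≠ 0)
    (hε : 0 ≤ ε) (k : ℤ) (v : EuclideanSpace ℝ (Fin d)) :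
    ‖F k (uvec P u k)‖ ^ 2 * Real.exp (-(3 * ε)) * nrmK P u ε k v ^ 2 ≤
        nrmK P u ε (k + 1) (F k v) ^ 2 ∧
      nrmK P u ε (k + 1) (F k v) ^ 2 ≤
        ‖F k (uvec P u k)‖ ^ 2 * Real.exp (3 * ε) * nrmK P u ε k v ^ 2 := by
  have hc := norm_apply_uvec_pos (P := P) (F k) hu k
  have hweight (m : ℤ) : |3 * |((m + 1 : ℤ) : ℝ)| * ε - 3 * |(m : ℝ)| * ε| ≤ 3 * ε := by
    have h1 : |(|(m : ℝ) + 1| - |(m : ℝ)|)| ≤ 1 := by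
      simpa using abs_abs_sub_abs_le_abs_sub ((m : ℝ) + 1) m
    rw [← sub_mul, ← mul_sub, abs_mul, abs_mul, abs_of_nonneg hε, abs_of_pos three_pos]
    push_cast
    nlinarith [mul_le_mul_of_nonneg_left h1 hε]
  have hsums := mul_tsum_le_tsum_and_tsum_le_mul_tsum
    (f := fun m => nrmTerm P u ε k v (m + 1)) (g := nrmTerm P u ε (k + 1) (F k v))
    (c' := ‖F k (uvec P u k)‖ ^ 2 * Real.exp (3 * ε))
    (fun m => nrmTerm_nonneg k v (m + 1)) (nrmTerm_nonneg (k + 1) (F k v))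
    (by positivity : 0 < ‖F k (uvec P u k)‖ ^ 2 * Real.exp (-(3 * ε)))
    (fun m => by
      rw [nrmTerm_succ_apply hP]
      gcongr
      exacts [nrmTerm_nonneg k v (m + 1), (abs_le.1 (hweight m)).1])
    (fun m => by
      rw [nrmTerm_succ_apply hP]
      gcongr
      exacts [nrmTerm_nonneg k v (m + 1), (abs_le.1 (hweight m)).2])
  have hshift : ∑' m, nrmTerm P u ε k v (m + 1) = ∑' m, nrmTerm P u ε k v m :=
    (Equiv.addRight 1).tsum_eq _
  rwa [hshift, ← nrmK_sq, ← nrmK_sq] at hsums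

theorem nrmK_succ_apply_bounds (hP : ∀ k, P (k + 1) = (P k).trans (F k)) (hu : u ≠ 0)
    (hε : 0 ≤ ε) (k : ℤ) (v : EuclideanSpace ℝ (Fin d)) :
    Real.exp (-(3 * ε) / 2) * ‖F k (uvec P u k)‖ * nrmK P u ε k v ≤
        nrmK P u ε (k + 1) (F k v) ∧
      nrmK P u ε (k + 1) (F k v) ≤
        Real.exp (3 * ε / 2) * ‖F k (uvec P u k)‖ * nrmK P u ε k v := by
  obtain ⟨hlow, hup⟩ := sq_nrmK_succ_apply_bounds hP hu hε k v
  have hN (j : ℤ) (x : EuclideanSpace ℝ (Fin d)) : 0 ≤ nrmK P u ε j x := Real.sqrt_nonneg _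
  constructor
  · refine (pow_le_pow_iff_left₀ (by have := hN k v; positivity) (hN _ _) two_ne_zero).1 ?_
    rwa [mul_pow, mul_pow, Real.exp_half, Real.sq_sqrt (Real.exp_pos _).le,
      mul_comm (Real.exp _)]
  · refine (pow_le_pow_iff_left₀ (hN _ _) (by have := hN k v; positivity) two_ne_zero).1 ?_
    rwa [mul_pow, mul_pow, Real.exp_half, Real.sq_sqrt (Real.exp_pos _).le,
      mul_comm (Real.exp _)]

end AdaptedNorm

theorem stmt_8_general {d : ℕ}
    (F P : ℤ → (EuclideanSpace ℝ (Fin d) ≃L[ℝ] EuclideanSpace ℝ (Fin d)))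
    (hP : ∀ k, P (k + 1) = (P k).trans (F k))
    (u : EuclideanSpace ℝ (Fin d)) (hu : ‖u‖ = 1)
    (ε : ℝ) (hε : 0 < ε) :
    -- the two-sided bound on the image of any `v`
    (∀ (k : ℤ) (v : EuclideanSpace ℝ (Fin d)),
      Real.exp (-(3 * ε) / 2) * ‖F k (uvec P u k)‖ * nrmK P u ε k v ≤
          nrmK P u ε (k + 1) (F k v) ∧
        nrmK P u ε (k + 1) (F k v) ≤
          Real.exp (3 * ε / 2) * ‖F k (uvec P u k)‖ * nrmK P u ε k v) ∧
    -- consequence for `‖·‖_k`-unit vectors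
    (∀ (k : ℤ) (v w : EuclideanSpace ℝ (Fin d)),
      nrmK P u ε k v = 1 → nrmK P u ε k w = 1 →
      Real.exp (-(3 * ε)) ≤ nrmK P u ε (k + 1) (F k w) / nrmK P u ε (k + 1) (F k v) ∧
        nrmK P u ε (k + 1) (F k w) / nrmK P u ε (k + 1) (F k v) ≤ Real.exp (3 * ε)) := by
  have hu0 : u ≠ 0 := norm_ne_zero_iff.1 (hu ▸ one_ne_zero)
  have hbounds := nrmK_succ_apply_bounds hP hu0 hε.le
  refine ⟨hbounds, fun k v w hv hw => ?_⟩
  have hv' := hbounds k v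
  have hw' := hbounds k w
  rw [hv, mul_one, mul_one] at hv'
  rw [hw, mul_one, mul_one] at hw'
  have hratio := div_mem_Icc_of_mem_Icc (Real.exp_pos _)
    (norm_apply_uvec_pos (P := P) (F k) hu0 k) hv' hw'
  rwa [← Real.exp_sub, ← Real.exp_sub, show -(3 * ε) / 2 - 3 * ε / 2 = -(3 * ε) by ring,
    show 3 * ε / 2 - -(3 * ε) / 2 = 3 * ε by ring] at hratio

theorem stmt_8 {d : ℕ}
    (F P : ℤ → (EuclideanSpace ℝ (Fin d) ≃L[ℝ] EuclideanSpace ℝ (Fin d)))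
    (hP0 : P 0 = ContinuousLinearEquiv.refl ℝ (EuclideanSpace ℝ (Fin d)))
    (hP : ∀ k, P (k + 1) = (P k).trans (F k))
    (u : EuclideanSpace ℝ (Fin d)) (hu : ‖u‖ = 1)
    (ε Cε : ℝ) (hε : 0 < ε)
    (hK : ∀ k n : ℤ,
      ‖(coc P k n : EuclideanSpace ℝ (Fin d) →L[ℝ] EuclideanSpace ℝ (Fin d))‖ *
        ‖((coc P k n).symm : EuclideanSpace ℝ (Fin d) →L[ℝ] EuclideanSpace ℝ (Fin d))‖ ≤
        Cε * Real.exp (ε * |(n : ℝ)|)) :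
    -- the two-sided bound on the image of any `v`
    (∀ (k : ℤ) (v : EuclideanSpace ℝ (Fin d)),
      Real.exp (-(3 * ε) / 2) * ‖F k (uvec P u k)‖ * nrmK P u ε k v ≤
          nrmK P u ε (k + 1) (F k v) ∧
        nrmK P u ε (k + 1) (F k v) ≤
          Real.exp (3 * ε / 2) * ‖F k (uvec P u k)‖ * nrmK P u ε k v) ∧
    -- consequence for `‖·‖_k`-unit vectors
    (∀ (k : ℤ) (v w : EuclideanSpace ℝ (Fin d)),
      nrmK P u ε k v = 1 → nrmK P u ε k w = 1 →
      Real.exp (-(3 * ε)) ≤ nrmK P u ε (k + 1) (F k w) / nrmK P u ε (k + 1) (F k v) ∧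
        nrmK P u ε (k + 1) (F k w) / nrmK P u ε (k + 1) (F k v) ≤ Real.exp (3 * ε)) :=
  stmt_8_general F P hP u hu ε hε
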